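/- Any homotopy invariant of nanophrases given by an angle bracket formula of degree m is a finite type invariant of degree at most m; i.e., it vanishes on all nanophrases with more than m semi-letters. -/
import Mathlib


open List

attribute [local instance] Classical.propDecidable

/-- A symbol in a nanophrase: either a separator `none` or a letter occurrence
`some (x, a)` where `x` is the letter's name and `a` its label in `α`. -/
abbrev NSym (α : Type) := Option (ℕ × α)

/-- A phrase: list of symbols; `none` separates components. -/
abbrev NPhrase (α : Type) := List (NSym α)

/-- The list of letter occurrences of a phrase. -/
def occs {α : Type} (p : NPhrase α) : List (ℕ × α) := p.filterMap id

/-- The set of (names of) letters appearing in a phrase. -/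
def lettersOf {α : Type} (p : NPhrase α) : Finset ℕ := ((occs p).map Prod.fst).toFinset

/-- The rank: number of distinct letters. -/
def rank {α : Type} (p : NPhrase α) : ℕ := (lettersOf p).card

/-- A nanophrase: each letter appears exactly twice, with a consistent label. -/
def IsNano {α : Type} (p : NPhrase α) : Prop :=
  (∀ x ∈ lettersOf p, ((occs p).map Prod.fst).count x = 2) ∧
  (∀ x a b, (x, a) ∈ occs p → (x, b) ∈ occs p → a = b)

/-- The number of components of a phrase. -/
def comps {α : Type} (p : NPhrase α) : ℕ := p.countP (fun s => s.isNone) + 1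

/-- The subphrase with letter set restricted to `T`. -/
def restrict {α : Type} (p : NPhrase α) (T : Finset ℕ) : NPhrase α :=
  p.filter (fun s => match s with | none => true | some (x, _) => decide (x ∈ T))

/-- Isomorphism of (nano)phrases: a renaming of letters preserving labels. -/
def Iso {α : Type} (p q : NPhrase α) : Prop :=
  ∃ σ : ℕ ≃ ℕ, p.map (Option.map (fun xa => (σ xa.1, xa.2))) = q

/-- Angle bracket: the number of subphrases of `p` isomorphic to `q`. -/
noncomputable def bracketN {α : Type} (q p : NPhrase α) : ℕ :=
  ((lettersOf p).powerset.filter (fun T => Iso (restrict p T) q)).card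

/-- Homotopy moves for homotopy data `(α, τ, S)`. -/
inductive HMove {α : Type} (τ : α → α) (S : Set (α × α × α)) : NPhrase α → NPhrase α → Prop
  | h1 (x y : NPhrase α) (i : ℕ) (a : α) :
      HMove τ S (x ++ [some (i,a), some (i,a)] ++ y) (x ++ y)
  | h2 (x y z : NPhrase α) (i j : ℕ) (a b : α) (h : a = τ b) :
      HMove τ S (x ++ [some (i,a), some (j,b)] ++ y ++ [some (j,b), some (i,a)] ++ z)
        (x ++ y ++ z)
  | h3 (x y z t : NPhrase α) (i j k : ℕ) (a b c : α) (h : (a,b,c) ∈ S) :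
      HMove τ S
        (x ++ [some (i,a), some (j,b)] ++ y ++ [some (i,a), some (k,c)] ++ z
           ++ [some (j,b), some (k,c)] ++ t)
        (x ++ [some (j,b), some (i,a)] ++ y ++ [some (k,c), some (i,a)] ++ z
           ++ [some (k,c), some (j,b)] ++ t)

/-- Homotopy: equivalence generated by isomorphism and the moves H1, H2, H3. -/
def Homotopic {α : Type} (τ : α → α) (S : Set (α × α × α)) : NPhrase α → NPhrase α → Prop :=
  Relation.EqvGen (fun p q => HMove τ S p q ∨ Iso p q)

/-- Build a phrase from a list of components. -/
def ofComponents {α : Type} (L : List (List (ℕ × α))) : NPhrase α :=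
  ((L.map (fun c => c.map some)).intersperse [none]).flatten

lemma occs_map {α : Type} (g : ℕ × α → ℕ × α) (p : NPhrase α) :
    occs (p.map (Option.map g)) = (occs p).map g := by
  induction p with
  | nil => rfl
  | cons s t ih => cases s <;> simp [occs, List.filterMap_cons] at ih ⊢ <;> simp [ih]

lemma iso_rank {α : Type} {p w : NPhrase α} (h : Iso p w) : rank p = rank w := by
  obtain ⟨σ, rfl⟩ := h
  unfold rank lettersOf
  rw [occs_map]
  have : ((occs p).map (fun xa => (σ xa.1, xa.2))).map Prod.fst
      = ((occs p).map Prod.fst).map σ := by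
    simp [List.map_map, Function.comp]
  rw [this]
  have h2 : ((map Prod.fst (occs p)).map σ).toFinset
      = (map Prod.fst (occs p)).toFinset.image σ := by
    ext x; simp
  rw [h2, Finset.card_image_of_injective _ σ.injective]

lemma occs_restrict {α : Type} (p : NPhrase α) (A : Finset ℕ) :
    occs (restrict p A) = (occs p).filter (fun xa => decide (xa.1 ∈ A)) := by
  induction p with
  | nil => rfl
  | cons s t ih =>
    cases s with
    | none => simpa [occs, restrict, List.filter_cons] using ih
    | some xa =>
      by_cases hx : xa.1 ∈ A <;>
        simp [occs, restrict, List.filter_cons, hx] at ih ⊢ <;> exact ih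

lemma lettersOf_restrict {α : Type} (p : NPhrase α) (A : Finset ℕ) :
    lettersOf (restrict p A) = lettersOf p ∩ A := by
  ext x
  simp only [lettersOf, occs_restrict, List.mem_toFinset, List.mem_map,
    List.mem_filter, Finset.mem_inter, decide_eq_true_eq]
  constructor
  · rintro ⟨xa, ⟨hm, hA⟩, rfl⟩; exact ⟨⟨xa, hm, rfl⟩, hA⟩
  · rintro ⟨⟨xa, hm, rfl⟩, hA⟩; exact ⟨xa, ⟨hm, hA⟩, rfl⟩

lemma restrict_restrict {α : Type} (p : NPhrase α) {T A : Finset ℕ} (h : T ⊆ A) :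
    restrict (restrict p A) T = restrict p T := by
  unfold restrict
  rw [List.filter_filter]
  congr 1
  funext s
  cases s with
  | none => rfl
  | some xa =>
    by_cases hx : xa.1 ∈ T
    · simp [hx, h hx]
    · simp [hx]

lemma neg_one_pow_sub {n k : ℕ} (h : k ≤ n) :
    ((-1 : ℤ)) ^ (n - k) = (-1) ^ n * (-1) ^ k := by
  have h2 : n - k + 2 * k = n + k := by omega
  calc ((-1:ℤ))^(n-k) = (-1)^(n-k) * ((-1)^2)^k := by norm_num
    _ = (-1)^(n-k+2*k) := by rw [← pow_mul, ← pow_add]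
    _ = (-1)^(n+k) := by rw [h2]
    _ = (-1)^n * (-1)^k := pow_add _ _ _

lemma alt_sum_zero {B D : Finset ℕ} (hBD : B ⊆ D) (hne : B ≠ D) :
    ∑ E ∈ D.powerset, (-1 : ℤ) ^ (D.card - E.card) * (if B ⊆ E then 1 else 0) = 0 := by
  classical
  simp only [mul_ite, mul_one, mul_zero]
  rw [← Finset.sum_filter]
  have key : ∑ E ∈ D.powerset.filter (fun E => B ⊆ E), (-1 : ℤ) ^ (D.card - E.card)
      = ∑ F ∈ (D \ B).powerset, (-1 : ℤ) ^ ((D \ B).card - F.card) := by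
    refine Finset.sum_nbij' (fun E => E \ B) (fun F => B ∪ F) ?_ ?_ ?_ ?_ ?_
    · intro E hE
      simp only [Finset.mem_filter, Finset.mem_powerset] at hE
      exact Finset.mem_powerset.mpr (Finset.sdiff_subset_sdiff hE.1 le_rfl)
    · intro F hF
      simp only [Finset.mem_powerset] at hF
      simp only [Finset.mem_filter, Finset.mem_powerset]
      exact ⟨Finset.union_subset hBD (hF.trans (Finset.sdiff_subset)), Finset.subset_union_left⟩
    · intro E hE
      simp only [Finset.mem_filter, Finset.mem_powerset] at hE
      exact Finset.union_sdiff_of_subset hE.2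
    · intro F hF
      simp only [Finset.mem_powerset] at hF
      have hd : Disjoint B F := Finset.disjoint_of_subset_right hF Finset.disjoint_sdiff
      show (B ∪ F) \ B = F
      rw [Finset.union_sdiff_cancel_left hd]
    · intro E hE
      simp only [Finset.mem_filter, Finset.mem_powerset] at hE
      congr 1
      rw [Finset.card_sdiff_of_subset hBD, Finset.card_sdiff_of_subset hE.2]
      have h1 : B.card ≤ E.card := Finset.card_le_card hE.2
      have h2 : E.card ≤ D.card := Finset.card_le_card hE.1
      omega
  rw [key]
  have hne' : (D \ B).Nonempty := by
    rw [Finset.sdiff_nonempty]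
    intro h
    exact hne (Finset.Subset.antisymm hBD h)
  calc ∑ F ∈ (D \ B).powerset, (-1 : ℤ) ^ ((D \ B).card - F.card)
      = ∑ F ∈ (D \ B).powerset, (-1 : ℤ) ^ (D \ B).card * (-1) ^ F.card := by
        refine Finset.sum_congr rfl fun F hF => ?_
        exact neg_one_pow_sub (Finset.card_le_card (Finset.mem_powerset.mp hF))
    _ = (-1 : ℤ) ^ (D \ B).card * ∑ F ∈ (D \ B).powerset, (-1 : ℤ) ^ F.card := by
        rw [Finset.mul_sum]
    _ = 0 := by rw [Finset.sum_powerset_neg_one_pow_card_of_nonempty hne', mul_zero]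

/-- fix homotopy data `(α, τ, S)`.  Suppose the homotopy invariant
`v` of `r`-component nanophrases is given by an angle bracket formula
`v p = ⟨u, p⟩` where every term of `u` has rank at most `m` (degree `m` formula).
Then `v` is finite type of degree at most `m`: its linear extension vanishes on
every nanophrase with more than `m` semi-letters (marked letter set `D`),
where a nanophrase with semi-letters denotes the signed sum of its resolutions. -/
theorem angle_bracket_formula_is_finite_type {α : Type}
    (τ : α → α) (hτ : Function.Involutive τ) (S : Set (α × α × α)) (r m : ℕ)
    (u : (NPhrase α) →₀ ℤ)
    (hdeg : ∀ w ∈ u.support, rank w ≤ m)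
    (v : NPhrase α → ℤ)
    (hv : ∀ p, v p = u.sum (fun w c => c * (bracketN w p : ℤ)))
    (hinv : ∀ p q, IsNano p → IsNano q → comps p = r → comps q = r →
      Homotopic τ S p q → v p = v q) :
    ∀ q : NPhrase α, IsNano q → comps q = r →
      ∀ D : Finset ℕ, D ⊆ lettersOf q → m < D.card →
        ∑ E ∈ D.powerset, (-1 : ℤ) ^ (D.card - E.card) *
            v (restrict q ((lettersOf q \ D) ∪ E)) = 0 := by
  classical
  intro q hq hc D hD hmD
  set L := lettersOf q with hLdef
  have hsub : ∀ E : Finset ℕ, E ⊆ D → (L \ D) ∪ E ⊆ L :=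
    fun E hE => Finset.union_subset Finset.sdiff_subset (hE.trans hD)
  -- express the bracket as a sum over subsets of L
  have hbr : ∀ w : NPhrase α, ∀ E ∈ D.powerset,
      (bracketN w (restrict q ((L \ D) ∪ E)) : ℤ)
      = ∑ T ∈ L.powerset,
          if (T ⊆ (L \ D) ∪ E ∧ Iso (restrict q T) w) then 1 else 0 := by
    intro w E hE
    rw [Finset.mem_powerset] at hE
    have hX : (L \ D) ∪ E ⊆ L := hsub E hE
    have hlet : lettersOf (restrict q ((L \ D) ∪ E)) = (L \ D) ∪ E := by
      rw [lettersOf_restrict, ← hLdef, Finset.inter_eq_right.mpr hX]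
    have hset : (lettersOf (restrict q ((L \ D) ∪ E))).powerset.filter
          (fun T => Iso (restrict (restrict q ((L \ D) ∪ E)) T) w)
        = L.powerset.filter
          (fun T => T ⊆ (L \ D) ∪ E ∧ Iso (restrict q T) w) := by
      rw [hlet]
      ext T
      simp only [Finset.mem_filter, Finset.mem_powerset]
      constructor
      · rintro ⟨hT, hi⟩
        rw [restrict_restrict q hT] at hi
        exact ⟨hT.trans hX, hT, hi⟩
      · rintro ⟨_, hT, hi⟩
        exact ⟨hT, by rwa [restrict_restrict q hT]⟩
    rw [bracketN, hset, Finset.card_filter]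
    push_cast
    rfl
  calc ∑ E ∈ D.powerset, (-1 : ℤ) ^ (D.card - E.card) * v (restrict q ((L \ D) ∪ E))
      = ∑ E ∈ D.powerset, ∑ w ∈ u.support,
          u w * ((-1 : ℤ) ^ (D.card - E.card) * (bracketN w (restrict q ((L \ D) ∪ E)) : ℤ)) := by
        refine Finset.sum_congr rfl fun E hE => ?_
        rw [hv, Finsupp.sum, Finset.mul_sum]
        exact Finset.sum_congr rfl fun w hw => by ring
    _ = ∑ w ∈ u.support, ∑ E ∈ D.powerset,
          u w * ((-1 : ℤ) ^ (D.card - E.card) * (bracketN w (restrict q ((L \ D) ∪ E)) : ℤ)) :=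
        Finset.sum_comm
    _ = 0 := by
        refine Finset.sum_eq_zero fun w hw => ?_
        rw [← Finset.mul_sum]
        refine mul_eq_zero_of_right _ ?_
        calc ∑ E ∈ D.powerset,
              (-1 : ℤ) ^ (D.card - E.card) * (bracketN w (restrict q ((L \ D) ∪ E)) : ℤ)
            = ∑ E ∈ D.powerset, ∑ T ∈ L.powerset, (-1 : ℤ) ^ (D.card - E.card) *
                (if (T ⊆ (L \ D) ∪ E ∧ Iso (restrict q T) w) then 1 else 0) := by
              refine Finset.sum_congr rfl fun E hE => ?_
              rw [hbr w E hE, Finset.mul_sum]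
          _ = ∑ T ∈ L.powerset, ∑ E ∈ D.powerset, (-1 : ℤ) ^ (D.card - E.card) *
                (if (T ⊆ (L \ D) ∪ E ∧ Iso (restrict q T) w) then 1 else 0) :=
              Finset.sum_comm
          _ = 0 := by
              refine Finset.sum_eq_zero fun T hT => ?_
              rw [Finset.mem_powerset] at hT
              by_cases hiso : Iso (restrict q T) w
              · -- D is not contained in T
                have hDT : ¬ D ⊆ T := by
                  intro hDsub
                  have h1 : rank (restrict q T) = rank w := iso_rank hiso
                  have h2 : rank (restrict q T) = T.card := by
                    rw [rank, lettersOf_restrict, ← hLdef,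
                      Finset.inter_eq_right.mpr hT]
                  have h3 := hdeg w hw
                  have h4 := Finset.card_le_card hDsub
                  omega
                have hcond : ∀ E ∈ D.powerset,
                    ((T ⊆ (L \ D) ∪ E ∧ Iso (restrict q T) w) ↔ T ∩ D ⊆ E) := by
                  intro E hE
                  rw [Finset.mem_powerset] at hE
                  constructor
                  · rintro ⟨h, -⟩ x hx
                    rw [Finset.mem_inter] at hx
                    rcases Finset.mem_union.mp (h hx.1) with h' | h'
                    · exact absurd (Finset.mem_sdiff.mp h').2 (fun h'' => h'' hx.2)
                    · exact h'
                  · intro h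
                    refine ⟨fun x hx => ?_, hiso⟩
                    by_cases hxD : x ∈ D
                    · exact Finset.mem_union_right _ (h (Finset.mem_inter.mpr ⟨hx, hxD⟩))
                    · exact Finset.mem_union_left _ (Finset.mem_sdiff.mpr ⟨hT hx, hxD⟩)
                have : ∑ E ∈ D.powerset, (-1 : ℤ) ^ (D.card - E.card) *
                      (if (T ⊆ (L \ D) ∪ E ∧ Iso (restrict q T) w) then 1 else 0)
                    = ∑ E ∈ D.powerset, (-1 : ℤ) ^ (D.card - E.card) *
                      (if T ∩ D ⊆ E then 1 else 0) := by
                  refine Finset.sum_congr rfl fun E hE => ?_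
                  congr 1
                  simp only [hcond E hE]
                rw [this]
                refine alt_sum_zero Finset.inter_subset_right (fun heq => hDT ?_)
                rw [← heq]
                exact Finset.inter_subset_left
              · refine Finset.sum_eq_zero fun E hE => ?_
                rw [if_neg (fun h => hiso h.2), mul_zero]
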